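/- Assume the Lieb–Robinson-type bound ‖U(t)† F_j U(t) − U'(t)† F_j U'(t)‖ ≤ ε_LR for a local operator F_j of unit norm, where U and U' are two unitary time evolutions. Then for any unitary ansatz V and Bell-pair cost functions, |C_LHST^{(μ)}(U, V) − C_LHST^{(μ)}(U', V)| ≤ 2 ε_LR, provided the projector Π_μ decomposes as Π_μ = (1/2) Σ_{i=1}^{4} F_i^A F_i^B with ‖F_i^A‖ = ‖F_i^B‖ = 1. -/

import Mathlib

/-!
Moving `W ⊗ V̄` through the expectation and expanding `Π_μ = ½ Σᵢ Fᵢᴬ ⊗ Fᵢᴮ`, the cost difference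
`C(U) - C(U')` is the real part of the expectation, in the maximally entangled state (of norm at
most one), of `½ Σᵢ (U'†FᵢᴬU' - U†FᵢᴬU) ⊗ V̄†FᵢᴮV̄`. The L2 operator norm is submultiplicative on
Kronecker products, since `A ⊗ B = (A ⊗ 1)(1 ⊗ B)` and both factors are block diagonal up to
reindexing, and it is invariant under unitary conjugation; so each of the four terms has norm at
most `ε_LR`.
-/

open Matrix Kronecker
open scoped Matrix.Norms.L2Operator

namespace Matrix

section Algebra

lemma sub_kronecker {R l m n p : Type*} [Ring R] (A A' : Matrix l m R) (B : Matrix n p R) :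
    (A - A') ⊗ₖ B = A ⊗ₖ B - A' ⊗ₖ B := by
  ext; simp [sub_mul]

variable {R : Type*} [CommSemiring R] [StarRing R]

lemma conjTranspose_kronecker_mul_kronecker_mul {m n m' n' : Type*} [Fintype m] [Fintype n]
    [Fintype m'] [Fintype n'] (W : Matrix m n R) (X : Matrix m' n' R)
    (A : Matrix m m R) (B : Matrix m' m' R) :
    (W ⊗ₖ X)ᴴ * (A ⊗ₖ B) * (W ⊗ₖ X) = (Wᴴ * A * W) ⊗ₖ (Xᴴ * B * X) := by
  rw [conjTranspose_kronecker, mul_kronecker_mul, mul_kronecker_mul]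

lemma star_mulVec_dotProduct_mulVec_mulVec {m n : Type*} [Fintype m] [Fintype n]
    (A : Matrix m n R) (P : Matrix m m R) (x : n → R) :
    star (A *ᵥ x) ⬝ᵥ P *ᵥ (A *ᵥ x) = star x ⬝ᵥ (Aᴴ * P * A) *ᵥ x := by
  rw [star_mulVec, mulVec_mulVec, dotProduct_mulVec, vecMul_vecMul, ← dotProduct_mulVec,
    Matrix.mul_assoc]

end Algebra

variable {𝕜 : Type*} [RCLike 𝕜]

lemma _root_.EuclideanSpace.norm_toLp_comp_equiv {m n : Type*} [Fintype m] [Fintype n]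
    (x : n → 𝕜) (e : m ≃ n) : ‖WithLp.toLp 2 (x ∘ e)‖ = ‖WithLp.toLp 2 x‖ := by
  simp only [EuclideanSpace.norm_eq, Function.comp_apply, e.sum_comp fun i => ‖x i‖ ^ 2]

lemma _root_.EuclideanSpace.norm_sq_toLp_prod {m o : Type*} [Fintype m] [Fintype o]
    (x : m × o → 𝕜) :
    ‖WithLp.toLp 2 x‖ ^ 2 = ∑ k, ‖WithLp.toLp 2 fun i => x (i, k)‖ ^ 2 := by
  simp only [EuclideanSpace.norm_sq_eq, Fintype.sum_prod_type_right]

lemma l2_opNorm_le_of_mulVec {m n : Type*} [Fintype m] [Fintype n] [DecidableEq n]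
    {A : Matrix m n 𝕜} {c : ℝ} (hc : 0 ≤ c)
    (h : ∀ x : n → 𝕜, ‖WithLp.toLp 2 (A *ᵥ x)‖ ≤ c * ‖WithLp.toLp 2 x‖) : ‖A‖ ≤ c :=
  ContinuousLinearMap.opNorm_le_bound _ hc fun x => h x.ofLp

lemma l2_opNorm_submatrix_equiv_le {l m n p : Type*} [Fintype l] [Fintype m] [Fintype n]
    [Fintype p] [DecidableEq n] [DecidableEq p] (A : Matrix m n 𝕜) (e : l ≃ m) (f : p ≃ n) :
    ‖A.submatrix e f‖ ≤ ‖A‖ := by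
  refine l2_opNorm_le_of_mulVec (norm_nonneg _) fun x => ?_
  rw [submatrix_mulVec_equiv, EuclideanSpace.norm_toLp_comp_equiv,
    ← EuclideanSpace.norm_toLp_comp_equiv x f.symm]
  exact A.l2_opNorm_mulVec (WithLp.toLp 2 (x ∘ f.symm))

lemma blockDiagonal_mulVec_apply {m n o : Type*} [Fintype n] [Fintype o] [DecidableEq o]
    (M : o → Matrix m n 𝕜) (x : n × o → 𝕜) (i : m) (k : o) :
    (blockDiagonal M *ᵥ x) (i, k) = (M k *ᵥ fun j => x (j, k)) i := by
  simp only [mulVec, dotProduct, Fintype.sum_prod_type_right, blockDiagonal_apply]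
  rw [Finset.sum_eq_single k (fun k' _ hk => by simp [Ne.symm hk]) (by simp)]
  simp

lemma l2_opNorm_blockDiagonal_le {m n o : Type*} [Fintype m] [Fintype n] [Fintype o]
    [DecidableEq n] [DecidableEq o] {M : o → Matrix m n 𝕜} {c : ℝ} (hc : 0 ≤ c)
    (hM : ∀ k, ‖M k‖ ≤ c) : ‖blockDiagonal M‖ ≤ c := by
  refine l2_opNorm_le_of_mulVec hc fun x => ?_
  refine le_of_pow_le_pow_left₀ two_ne_zero (by positivity) ?_
  rw [mul_pow, EuclideanSpace.norm_sq_toLp_prod, EuclideanSpace.norm_sq_toLp_prod, Finset.mul_sum]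
  refine Finset.sum_le_sum fun k _ => ?_
  simp only [blockDiagonal_mulVec_apply, ← mul_pow]
  exact pow_le_pow_left₀ (norm_nonneg _)
    (((M k).l2_opNorm_mulVec (WithLp.toLp 2 _)).trans (by gcongr; exact hM k)) 2

lemma l2_opNorm_kronecker_one_le {l m n : Type*} [Fintype l] [Fintype m] [Fintype n]
    [DecidableEq m] [DecidableEq n] (A : Matrix l m 𝕜) :
    ‖A ⊗ₖ (1 : Matrix n n 𝕜)‖ ≤ ‖A‖ := by
  rw [kronecker_one]
  exact l2_opNorm_blockDiagonal_le (norm_nonneg A) fun _ => le_rfl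

lemma l2_opNorm_one_kronecker_le {l m n : Type*} [Fintype l] [Fintype m] [Fintype n]
    [DecidableEq l] [DecidableEq n] (B : Matrix m n 𝕜) :
    ‖(1 : Matrix l l 𝕜) ⊗ₖ B‖ ≤ ‖B‖ := by
  rw [one_kronecker, reindex_apply]
  exact (l2_opNorm_submatrix_equiv_le _ _ _).trans
    (l2_opNorm_blockDiagonal_le (norm_nonneg B) fun _ => le_rfl)

lemma l2_opNorm_kronecker_le {l m n p : Type*} [Fintype l] [Fintype m] [Fintype n] [Fintype p]
    [DecidableEq m] [DecidableEq n] [DecidableEq p] (A : Matrix l m 𝕜) (B : Matrix n p 𝕜) :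
    ‖A ⊗ₖ B‖ ≤ ‖A‖ * ‖B‖ := by
  have h : A ⊗ₖ B = (A ⊗ₖ (1 : Matrix n n 𝕜)) * ((1 : Matrix m m 𝕜) ⊗ₖ B) := by
    rw [← mul_kronecker_mul, Matrix.mul_one, Matrix.one_mul]
  rw [h]
  exact (l2_opNorm_mul _ _).trans <| mul_le_mul (l2_opNorm_kronecker_one_le A)
    (l2_opNorm_one_kronecker_le B) (norm_nonneg _) (norm_nonneg A)

lemma l2_opNorm_sum_kronecker_sub_le {κ l m n p : Type*} [Fintype l] [Fintype m] [Fintype n]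
    [Fintype p] [DecidableEq m] [DecidableEq n] [DecidableEq p] (s : Finset κ)
    (A A' : κ → Matrix l m 𝕜) (B : κ → Matrix n p 𝕜) :
    ‖∑ i ∈ s, A i ⊗ₖ B i - ∑ i ∈ s, A' i ⊗ₖ B i‖ ≤ ∑ i ∈ s, ‖A i - A' i‖ * ‖B i‖ := by
  simp only [← Finset.sum_sub_distrib, ← sub_kronecker]
  exact (norm_sum_le _ _).trans (Finset.sum_le_sum fun i _ => l2_opNorm_kronecker_le _ _)

lemma l2_opNorm_star_mul_mul_of_mem_unitary {n : Type*} [Fintype n] [DecidableEq n]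
    {X : Matrix n n 𝕜} (hX : X ∈ unitary (Matrix n n 𝕜)) (A : Matrix n n 𝕜) :
    ‖star X * A * X‖ = ‖A‖ := by
  rw [CStarRing.norm_mul_mem_unitary _ hX, CStarRing.norm_mem_unitary_mul _ (Unitary.star_mem hX)]

lemma norm_star_dotProduct_mulVec_le {n : Type*} [Fintype n] [DecidableEq n]
    (A : Matrix n n 𝕜) (x : n → 𝕜) :
    ‖star x ⬝ᵥ A *ᵥ x‖ ≤ ‖A‖ * ‖WithLp.toLp 2 x‖ ^ 2 := by
  rw [dotProduct_comm, ← EuclideanSpace.inner_toLp_toLp]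
  calc _ ≤ ‖WithLp.toLp 2 x‖ * ‖WithLp.toLp 2 (A *ᵥ x)‖ := norm_inner_le_norm _ _
    _ ≤ ‖WithLp.toLp 2 x‖ * (‖A‖ * ‖WithLp.toLp 2 x‖) := by
        gcongr; exact A.l2_opNorm_mulVec (WithLp.toLp 2 x)
    _ = ‖A‖ * ‖WithLp.toLp 2 x‖ ^ 2 := by ring

end Matrix

noncomputable def bellState (ι : Type*) [Fintype ι] [DecidableEq ι] : ι × ι → ℂ :=
  fun p => if p.1 = p.2 then ((1 / Real.sqrt (Fintype.card ι) : ℝ) : ℂ) else 0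

-- An inequality rather than `= 1`, because `bellState ι = 0` when `ι` is empty.
lemma norm_sq_toLp_bellState_le (ι : Type*) [Fintype ι] [DecidableEq ι] :
    ‖WithLp.toLp 2 (bellState ι)‖ ^ 2 ≤ 1 := by
  have hdiag (i : ι) : ∑ j, ‖bellState ι (i, j)‖ ^ 2 = 1 / (Fintype.card ι : ℝ) := by
    rw [Finset.sum_eq_single i (fun j _ hj => by simp [bellState, Ne.symm hj]) (by simp)]
    simp [bellState]
  rw [EuclideanSpace.norm_sq_eq, Fintype.sum_prod_type]
  simp only [hdiag, Finset.sum_const, Finset.card_univ, nsmul_eq_mul]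
  rw [mul_one_div]
  exact div_self_le_one _

theorem stmt_11_general {ι : Type*} [Fintype ι] [DecidableEq ι] (ε : ℝ)
    (U U' V : Matrix.unitaryGroup ι ℂ)
    (FA FB : Fin 4 → Matrix ι ι ℂ)
    (hFB : ∀ i, ‖Matrix.toEuclideanCLM (𝕜 := ℂ) (FB i)‖ = 1)
    (hLR : ∀ i, ‖Matrix.toEuclideanCLM (𝕜 := ℂ)
        ((U : Matrix ι ι ℂ)ᴴ * FA i * (U : Matrix ι ι ℂ) -
          (U' : Matrix ι ι ℂ)ᴴ * FA i * (U' : Matrix ι ι ℂ))‖ ≤ ε)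
    (Proj : Matrix (ι × ι) (ι × ι) ℂ)
    (hProj : Proj = (1 / 2 : ℂ) • ∑ i, (FA i ⊗ₖ FB i))
    (Φ : ι × ι → ℂ)
    (hΦ : ∀ p, Φ p = if p.1 = p.2 then ((1 / Real.sqrt (Fintype.card ι) : ℝ) : ℂ) else 0)
    (C : Matrix.unitaryGroup ι ℂ → ℝ)
    (hC : ∀ W : Matrix.unitaryGroup ι ℂ,
      C W = 1 - (star (((W : Matrix ι ι ℂ) ⊗ₖ ((V : Matrix ι ι ℂ).map (starRingEnd ℂ))).mulVec Φ) ⬝ᵥ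
        Proj.mulVec (((W : Matrix ι ι ℂ) ⊗ₖ ((V : Matrix ι ι ℂ).map (starRingEnd ℂ))).mulVec Φ)).re) :
    |C U - C U'| ≤ 2 * ε := by
  set X := (V : Matrix ι ι ℂ).map (starRingEnd ℂ)
  have hX : X ∈ unitary (Matrix ι ι ℂ) := map_star_mem_unitaryGroup_iff.mpr V.2
  set G : Fin 4 → Matrix ι ι ℂ := fun i => Xᴴ * FB i * X
  set M : Matrix ι ι ℂ → Matrix (ι × ι) (ι × ι) ℂ := fun W =>
    (1 / 2 : ℂ) • ∑ i, (Wᴴ * FA i * W) ⊗ₖ G i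
  have hCM : C U - C U' = (star Φ ⬝ᵥ (M U' - M U) *ᵥ Φ).re := by
    simp only [hC, star_mulVec_dotProduct_mulVec_mulVec, hProj, Matrix.mul_smul, Matrix.smul_mul,
      Finset.mul_sum, Finset.sum_mul, conjTranspose_kronecker_mul_kronecker_mul, M, G, sub_mulVec,
      dotProduct_sub, Complex.sub_re]
    ring
  have hG (i : Fin 4) : ‖G i‖ = 1 := (l2_opNorm_star_mul_mul_of_mem_unitary hX (FB i)).trans (hFB i)
  have hM : ‖M U' - M U‖ ≤ 2 * ε := calc
    ‖M U' - M U‖ ≤ 1 / 2 * ∑ i, ε * ‖G i‖ := by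
      rw [← smul_sub, norm_smul]
      gcongr
      · norm_num
      refine (l2_opNorm_sum_kronecker_sub_le _ _ _ _).trans (Finset.sum_le_sum fun i _ => ?_)
      gcongr
      rw [norm_sub_rev]
      exact hLR i
    _ = 2 * ε := by simp only [hG]; norm_num; ring
  calc |C U - C U'| ≤ ‖star Φ ⬝ᵥ (M U' - M U) *ᵥ Φ‖ := hCM ▸ Complex.abs_re_le_norm _
    _ ≤ ‖M U' - M U‖ * ‖WithLp.toLp 2 Φ‖ ^ 2 := norm_star_dotProduct_mulVec_le _ _
    _ ≤ 2 * ε := by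
      rw [funext hΦ]
      exact (mul_le_of_le_one_right (norm_nonneg _) (norm_sq_toLp_bellState_le ι)).trans hM

/-- If the Lieb–Robinson-type bound `‖U†FᵢᴬU − U'†FᵢᴬU'‖ ≤ ε_LR` holds for the
unit-norm local operators `Fᵢᴬ` appearing in the decomposition
`Π_μ = (1/2) ∑ᵢ Fᵢᴬ ⊗ Fᵢᴮ` of the Bell-pair projector, then the LHST cost
functions (with ansatz `V` on the copy register) of the two time evolutions `U`
and `U'` differ by at most `2 ε_LR`. Operator norms are taken via the action on
the Euclidean space. -/
theorem stmt_11 {ι : Type*} [Fintype ι] [DecidableEq ι] (ε : ℝ)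
    (U U' V : Matrix.unitaryGroup ι ℂ)
    (FA FB : Fin 4 → Matrix ι ι ℂ)
    (hFA : ∀ i, ‖Matrix.toEuclideanCLM (𝕜 := ℂ) (FA i)‖ = 1)
    (hFB : ∀ i, ‖Matrix.toEuclideanCLM (𝕜 := ℂ) (FB i)‖ = 1)
    (hLR : ∀ i, ‖Matrix.toEuclideanCLM (𝕜 := ℂ)
        ((U : Matrix ι ι ℂ)ᴴ * FA i * (U : Matrix ι ι ℂ) -
          (U' : Matrix ι ι ℂ)ᴴ * FA i * (U' : Matrix ι ι ℂ))‖ ≤ ε)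
    (Proj : Matrix (ι × ι) (ι × ι) ℂ)
    (hProj : Proj = (1 / 2 : ℂ) • ∑ i, (FA i ⊗ₖ FB i))
    (Φ : ι × ι → ℂ)
    (hΦ : ∀ p, Φ p = if p.1 = p.2 then ((1 / Real.sqrt (Fintype.card ι) : ℝ) : ℂ) else 0)
    (C : Matrix.unitaryGroup ι ℂ → ℝ)
    (hC : ∀ W : Matrix.unitaryGroup ι ℂ,
      C W = 1 - (star (((W : Matrix ι ι ℂ) ⊗ₖ ((V : Matrix ι ι ℂ).map (starRingEnd ℂ))).mulVec Φ) ⬝ᵥ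
        Proj.mulVec (((W : Matrix ι ι ℂ) ⊗ₖ ((V : Matrix ι ι ℂ).map (starRingEnd ℂ))).mulVec Φ)).re) :
    |C U - C U'| ≤ 2 * ε :=
  stmt_11_general ε U U' V FA FB hFB hLR Proj hProj Φ hΦ C hC
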